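/- arXiv:1905.01512 — 3 statements merged into one kernel-verified Lean document; each statement's English description precedes it below -/
import Mathlib

section
/- Let Λ = M·ℤ^d where M is an invertible d×d real matrix with det M = 1, and let Λ* = (Mᵀ)⁻¹·ℤ^d be its dual lattice. Let L be a k-dimensional linear subspace of ℝ^d such that Γ = L ∩ Λ is a lattice of rank k. Then Γ^⊥ = L^⊥ ∩ Λ* is a lattice of rank d − k, and the covolume (determinant) of Γ^⊥ equals the covolume of Γ. -/
/-!
`Γ = L ∩ Λ` is a primitive sublattice of `Λ`: the quotient `Λ / Γ` is torsion free because `L` is a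
real subspace. Over the PID `ℤ` a basis of `Γ` therefore extends to a basis `a` of `Λ`. Let `A` be
the matrix with columns `a` and `B = (Aᵀ)⁻¹`; the columns of `B` are the dual basis, a basis of
`Λ*`, and those dual to the complement of the basis of `Γ` form a basis of `L^⊥ ∩ Λ*`. Their Gram
matrix is the complementary block of `(AᵀA)⁻¹`, so Jacobi's complementary minor identity gives
`det Gram(Γ^⊥) · det (AᵀA) = det Gram(Γ)`, and `det (AᵀA) = (det M)² = 1`.
-/

open Matrix Module Submodule
open scoped RealInnerProductSpace

theorem Submodule.exists_basis_sum_inl_eq {R N ι : Type*} [CommRing R] [IsDomain R]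
    [IsPrincipalIdealRing R] [AddCommGroup N] [Module R N] [Module.Finite R N]
    {P : Submodule R N} [IsTorsionFree R (N ⧸ P)] (bP : Basis ι R P) :
    ∃ u : Basis (ι ⊕ Fin (finrank R (N ⧸ P))) R N, ∀ i, u (.inl i) = bP i := by
  -- `N ⧸ P` is finite and torsion free, hence free, hence projective: `P` splits off.
  obtain ⟨s, hs⟩ := P.mkQ.exists_rightInverse_of_surjective P.range_mkQ
  let e := (LinearMap.exact_subtype_mkQ P).splitSurjectiveEquiv P.subtype_injective ⟨s, hs⟩
  refine ⟨(bP.prod (Module.finBasis R (N ⧸ P))).map e.1.symm, fun i => ?_⟩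
  simpa using (LinearMap.congr_fun e.2.1 (bP i)).symm

theorem Submodule.isTorsionFree_quotient_comap_restrictScalars {N V : Type*} [AddCommGroup N]
    [AddCommGroup V] [Module ℝ V] (φ : N →ₗ[ℤ] V) (L : Submodule ℝ V) :
    IsTorsionFree ℤ (N ⧸ (L.restrictScalars ℤ).comap φ) := by
  refine .of_smul_eq_zero fun r q hrq => ?_
  obtain ⟨x, rfl⟩ := mkQ_surjective _ q
  rw [← map_smul, mkQ_apply, Quotient.mk_eq_zero] at hrq
  rw [mkQ_apply, Quotient.mk_eq_zero]
  simp only [mem_comap, restrictScalars_mem, map_zsmul, ← Int.cast_smul_eq_zsmul ℝ] at hrq ⊢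
  exact or_iff_not_imp_left.2 fun hr => (L.smul_mem_iff (Int.cast_ne_zero.2 hr)).1 hrq

namespace Matrix

theorem det_toBlocks₂₂_mul_det {ι κ K : Type*} [Fintype ι] [Fintype κ] [DecidableEq ι]
    [DecidableEq κ] [Field K] {G H : Matrix (ι ⊕ κ) (ι ⊕ κ) K} (hGH : G * H = 1)
    (h₁₁ : G.toBlocks₁₁.det ≠ 0) :
    H.toBlocks₂₂.det * G.det = G.toBlocks₁₁.det := by
  obtain ⟨A, B, C, D, rfl⟩ : ∃ A B C D, G = fromBlocks A B C D :=
    ⟨_, _, _, _, (fromBlocks_toBlocks G).symm⟩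
  rw [toBlocks_fromBlocks₁₁] at h₁₁ ⊢
  let := A.invertibleOfIsUnitDet h₁₁.isUnit
  let := invertibleOfRightInverse _ H hGH
  have hdet := det_fromBlocks₁₁ A B C D
  have hS : (D - C * ⅟A * B).det ≠ 0 :=
    right_ne_zero_of_mul (hdet ▸ det_ne_zero_of_right_inverse hGH)
  let := (D - C * ⅟A * B).invertibleOfIsUnitDet hS.isUnit
  rw [← invOf_eq_right_inv hGH, invOf_fromBlocks₁₁_eq, toBlocks_fromBlocks₂₂, hdet,
    mul_left_comm, ← det_mul, invOf_mul_self, det_one, mul_one]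

theorem intCast_map_mul_eq_one {n m : Type*} [Fintype m] [DecidableEq n] {U : Matrix n m ℤ}
    {V : Matrix m n ℤ} (h : U * V = 1) :
    U.map (Int.cast : ℤ → ℝ) * V.map (Int.cast : ℤ → ℝ) = 1 := by
  convert congrArg (·.map (Int.castRingHom ℝ)) h using 1
  · rw [Matrix.map_mul]; rfl
  · simp

theorem det_transpose_mul_self_mul_intCast {n m : Type*} [Fintype n] [DecidableEq n]
    [Fintype m] [DecidableEq m] (e : m ≃ n) (M : Matrix n n ℝ) {U : Matrix n m ℤ}
    {V : Matrix m n ℤ} (hUV : U * V = 1) :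
    ((M * U.map (Int.cast : ℤ → ℝ))ᵀ * (M * U.map (Int.cast : ℤ → ℝ))).det = M.det ^ 2 := by
  set U₀ := U.submatrix id e.symm
  have hU₀ : IsUnit U₀.det := isUnit_det_of_right_inverse (B := V.submatrix e.symm id) (by
    rw [submatrix_mul_equiv, hUV, submatrix_id_id])
  have hU₀sq : (U₀.map (Int.cast : ℤ → ℝ)).det ^ 2 = 1 := by
    rw [show (U₀.map (Int.cast : ℤ → ℝ)).det = (U₀.det : ℝ) from
      ((Int.castRingHom ℝ).map_det U₀).symm]
    rcases Int.isUnit_iff.1 hU₀ with h | h <;> simp [h]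
  rw [← det_submatrix_equiv_self e.symm]
  -- reindexing the outer indices of the product is definitionally reindexing the columns of `U`
  change ((M * U₀.map (Int.cast : ℤ → ℝ))ᵀ * (M * U₀.map (Int.cast : ℤ → ℝ))).det = M.det ^ 2
  rw [det_mul, det_transpose, det_mul]
  linear_combination M.det ^ 2 * hU₀sq

theorem transpose_mul_intCast_mul_inv_transpose {n m : Type*} [Fintype n] [DecidableEq n]
    [Fintype m] [DecidableEq m] {M : Matrix n n ℝ} (hM : IsUnit M.det) {U : Matrix n m ℤ}
    {V : Matrix m n ℤ} (hVU : V * U = 1) :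
    (M * U.map (Int.cast : ℤ → ℝ))ᵀ * ((Mᵀ)⁻¹ * Vᵀ.map (Int.cast : ℤ → ℝ)) = 1 := by
  rw [transpose_mul, Matrix.mul_assoc, ← Matrix.mul_assoc Mᵀ,
    mul_nonsing_inv _ (by rwa [det_transpose]), Matrix.one_mul, transpose_map, ← transpose_mul,
    intCast_map_mul_eq_one hVU, transpose_one]

variable {n m : Type*}

def euclideanCol (A : Matrix n m ℝ) (j : m) : EuclideanSpace ℝ n := WithLp.toLp 2 (Aᵀ j)

theorem inner_euclideanCol [Fintype n] (A B : Matrix n m ℝ) (i j : m) :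
    ⟪A.euclideanCol i, B.euclideanCol j⟫ = (Aᵀ * B) i j := by
  simp [euclideanCol, mul_apply, PiLp.inner_apply, mul_comm]

theorem sum_smul_euclideanCol [Fintype m] (A : Matrix n m ℝ) (c : m → ℝ) :
    ∑ j, c j • A.euclideanCol j = WithLp.toLp 2 (A *ᵥ c) := by
  ext i
  simp [euclideanCol, mulVec, dotProduct, mul_comm]

theorem linearIndependent_euclideanCol_of_mul_eq_one [Fintype n] [Fintype m] [DecidableEq m]
    {A : Matrix n m ℝ} {B : Matrix m n ℝ} (hBA : B * A = 1) :
    LinearIndependent ℝ A.euclideanCol := by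
  rw [Fintype.linearIndependent_iff]
  intro c hc
  have : A *ᵥ c = 0 := by simpa [sum_smul_euclideanCol] using hc
  simpa [mulVec_mulVec, hBA, funext_iff] using congrArg (B *ᵥ ·) this

def colLattice [Fintype m] (A : Matrix n m ℝ) : Set (EuclideanSpace ℝ n) :=
  {v | ∃ x : m → ℤ, ∀ i, v i = A.mulVec (fun j => (x j : ℝ)) i}

theorem mem_colLattice_iff [Fintype m] {A : Matrix n m ℝ} {v : EuclideanSpace ℝ n} :
    v ∈ A.colLattice ↔ ∃ c : m → ℤ, v = ∑ j, (c j : ℝ) • A.euclideanCol j := by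
  simp only [colLattice, sum_smul_euclideanCol, Set.mem_ofPred_eq, WithLp.ext_iff, funext_iff]

theorem map_mulVec_intCast [Fintype m] {l : Type*} [Fintype l] (U : Matrix m l ℤ) (x : l → ℤ) :
    U.map (↑) *ᵥ (fun j => (x j : ℝ)) = fun i => ((U *ᵥ x) i : ℝ) :=
  (funext (RingHom.map_mulVec (Int.castRingHom ℝ) U x)).symm

theorem colLattice_mul_intCast [Fintype m] [DecidableEq m] {l : Type*} [Fintype l]
    (A : Matrix n m ℝ) {U : Matrix m l ℤ} {V : Matrix l m ℤ} (hUV : U * V = 1) :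
    (A * U.map (Int.cast : ℤ → ℝ)).colLattice = A.colLattice := by
  ext v
  constructor
  · rintro ⟨x, hx⟩
    simp only [← mulVec_mulVec, map_mulVec_intCast] at hx
    exact ⟨U *ᵥ x, hx⟩
  · rintro ⟨x, hx⟩
    refine ⟨V *ᵥ x, fun i => ?_⟩
    rw [hx, ← map_mulVec_intCast, mulVec_mulVec, Matrix.mul_assoc, intCast_map_mul_eq_one hUV,
      Matrix.mul_one]

def intMulVec [Fintype m] (A : Matrix n m ℝ) : (m → ℤ) →ₗ[ℤ] EuclideanSpace ℝ n where
  toFun x := WithLp.toLp 2 (A *ᵥ fun j => (x j : ℝ))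
  map_add' x y := by ext; simp [mulVec, dotProduct, mul_add, Finset.sum_add_distrib]
  map_smul' r x := by ext; simp [mulVec, dotProduct, Finset.mul_sum, mul_left_comm]

theorem colLattice_eq_range_intMulVec [Fintype m] (A : Matrix n m ℝ) :
    A.colLattice = Set.range A.intMulVec := by
  ext v
  simp [colLattice, intMulVec, WithLp.ext_iff, funext_iff, eq_comm]

theorem intMulVec_injective [Fintype n] [DecidableEq n] {A : Matrix n n ℝ} (hA : IsUnit A) :
    Function.Injective A.intMulVec := by
  intro x y hxy
  have := (mulVec_injective_iff_isUnit.2 hA) (congrArg WithLp.ofLp hxy)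
  funext j
  exact_mod_cast congrFun this j

theorem euclideanCol_mul_intCast [Fintype m] {l : Type*} (A : Matrix n m ℝ) (U : Matrix m l ℤ)
    (j : l) : (A * U.map (Int.cast : ℤ → ℝ)).euclideanCol j = A.intMulVec (Uᵀ j) := by
  ext i
  simp [euclideanCol, intMulVec, mul_apply, mulVec, dotProduct, mul_comm]

theorem exists_basis_comap_intMulVec {ι : Type*} [Fintype n] [DecidableEq n] [Fintype ι]
    {M : Matrix n n ℝ} (hM : IsUnit M) {L : Submodule ℝ (EuclideanSpace ℝ n)}
    {b : ι → EuclideanSpace ℝ n} (hb : LinearIndependent ℝ b)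
    (hbspan : (L : Set (EuclideanSpace ℝ n)) ∩ M.colLattice =
      {v | ∃ c : ι → ℤ, v = ∑ i, (c i : ℝ) • b i}) :
    ∃ bP : Basis ι ℤ ((L.restrictScalars ℤ).comap M.intMulVec), ∀ i, M.intMulVec (bP i) = b i := by
  classical
  have hb_mem (i : ι) : b i ∈ (L : Set (EuclideanSpace ℝ n)) ∩ M.colLattice :=
    hbspan ▸ ⟨Pi.single i 1, by simp [Pi.single_apply]⟩
  choose x hx using fun i => M.colLattice_eq_range_intMulVec ▸ (hb_mem i).2
  have hxind : LinearIndependent ℤ x :=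
    .of_comp _ ((funext hx : M.intMulVec ∘ x = b) ▸ hb.restrict_scalars' ℤ)
  have hspan : span ℤ (Set.range x) = (L.restrictScalars ℤ).comap M.intMulVec := by
    refine le_antisymm
      (span_le.2 (Set.range_subset_iff.2 fun i => by simpa [hx] using (hb_mem i).1)) fun p hp => ?_
    obtain ⟨c, hc⟩ := (hbspan.le ⟨hp, M.colLattice_eq_range_intMulVec ▸ ⟨p, rfl⟩⟩ : _)
    rw [mem_span_range_iff_exists_fun]
    refine ⟨c, intMulVec_injective hM ?_⟩
    simp only [hc, map_sum, map_zsmul, hx, Int.cast_smul_eq_zsmul]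
  exact ⟨(Basis.span hxind).map (LinearEquiv.ofEq _ _ hspan), fun i => by simp [hx]⟩

theorem exists_unimodular_euclideanCol_inl_eq {ι κ : Type*} [Fintype n] [DecidableEq n]
    [Fintype ι] [DecidableEq ι] [Fintype κ] [DecidableEq κ]
    {M : Matrix n n ℝ} (hM : IsUnit M) {L : Submodule ℝ (EuclideanSpace ℝ n)}
    {b : ι → EuclideanSpace ℝ n} (hb : LinearIndependent ℝ b)
    (hbspan : (L : Set (EuclideanSpace ℝ n)) ∩ M.colLattice =
      {v | ∃ c : ι → ℤ, v = ∑ i, (c i : ℝ) • b i})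
    (hcard : Fintype.card ι + Fintype.card κ = Fintype.card n) :
    ∃ (U : Matrix n (ι ⊕ κ) ℤ) (V : Matrix (ι ⊕ κ) n ℤ), U * V = 1 ∧ V * U = 1 ∧
      (fun i => (M * U.map (Int.cast : ℤ → ℝ)).euclideanCol (.inl i)) = b := by
  obtain ⟨bP, hbP⟩ := exists_basis_comap_intMulVec hM hb hbspan
  have := L.isTorsionFree_quotient_comap_restrictScalars M.intMulVec
  obtain ⟨u, hu⟩ := exists_basis_sum_inl_eq bP
  have hrank :
      Fintype.card κ = finrank ℤ ((n → ℤ) ⧸ (L.restrictScalars ℤ).comap M.intMulVec) := by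
    have := finrank_eq_card_basis u
    simp only [finrank_fintype_fun_eq_card, Fintype.card_sum, Fintype.card_fin] at this
    omega
  let u' := u.reindex (Equiv.sumCongr (Equiv.refl ι) (Fintype.equivFinOfCardEq hrank).symm)
  refine ⟨(Pi.basisFun ℤ n).toMatrix u', u'.toMatrix (Pi.basisFun ℤ n),
    Basis.toMatrix_mul_toMatrix_flip _ _, Basis.toMatrix_mul_toMatrix_flip _ _, funext fun i => ?_⟩
  rw [euclideanCol_mul_intCast, ← hbP i, ← hu i]
  congr 1
  ext r
  simp [u', Basis.toMatrix_apply]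

section Duality

variable {ι κ : Type*} [Fintype n] [DecidableEq ι] [DecidableEq κ] {A B : Matrix n (ι ⊕ κ) ℝ}

theorem inner_euclideanCol_sum_smul [Fintype ι] [Fintype κ] (hAB : Aᵀ * B = 1) (p : ι ⊕ κ)
    (c : ι ⊕ κ → ℝ) : ⟪A.euclideanCol p, ∑ q, c q • B.euclideanCol q⟫ = c p := by
  simp_rw [inner_sum, real_inner_smul_right, inner_euclideanCol, hAB, one_apply]
  simp

theorem euclideanCol_inr_mem_orthogonal (hAB : Aᵀ * B = 1)
    {L : Submodule ℝ (EuclideanSpace ℝ n)}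
    (hL : L ≤ span ℝ (Set.range fun i => A.euclideanCol (.inl i))) (j : κ) :
    B.euclideanCol (.inr j) ∈ Lᗮ := by
  rw [mem_orthogonal']
  intro u hu
  refine (span_le (p := LinearMap.ker (innerₛₗ ℝ (B.euclideanCol (.inr j)))) |>.2 ?_ (hL hu))
  rintro _ ⟨i, rfl⟩
  simp [real_inner_comm, inner_euclideanCol, hAB]

theorem orthogonal_inter_colLattice [Fintype ι] [Fintype κ] (hAB : Aᵀ * B = 1)
    {L : Submodule ℝ (EuclideanSpace ℝ n)}
    (hL : span ℝ (Set.range fun i => A.euclideanCol (.inl i)) = L) :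
    (Lᗮ : Set (EuclideanSpace ℝ n)) ∩ B.colLattice =
      {v | ∃ c : κ → ℤ, v = ∑ j, (c j : ℝ) • B.euclideanCol (.inr j)} := by
  ext v
  constructor
  · rintro ⟨hv, hvB⟩
    obtain ⟨c, rfl⟩ := mem_colLattice_iff.1 hvB
    have hc (i : ι) : c (.inl i) = 0 := by
      have hi : A.euclideanCol (.inl i) ∈ L := hL ▸ subset_span ⟨i, rfl⟩
      have := inner_right_of_mem_orthogonal hi hv
      exact_mod_cast (inner_euclideanCol_sum_smul hAB (.inl i) _).symm.trans this
    exact ⟨fun j => c (.inr j), by simp [Fintype.sum_sum_type, hc]⟩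
  · rintro ⟨c, rfl⟩
    refine ⟨sum_mem fun j _ => smul_mem _ _ (euclideanCol_inr_mem_orthogonal hAB hL.ge j),
      mem_colLattice_iff.2 ⟨Sum.elim 0 c, ?_⟩⟩
    simp [Fintype.sum_sum_type]

theorem det_gram_inr_mul_det [Fintype ι] [Fintype κ] [DecidableEq n] (hAB : Aᵀ * B = 1)
    (hBA : B * Aᵀ = 1) (hA : LinearIndependent ℝ fun i => A.euclideanCol (.inl i)) :
    (gram ℝ fun j => B.euclideanCol (.inr j)).det * (Aᵀ * A).det =
      (gram ℝ fun i => A.euclideanCol (.inl i)).det := by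
  have hGH : Aᵀ * A * (Bᵀ * B) = 1 := by
    rw [Matrix.mul_assoc, ← Matrix.mul_assoc A, ← transpose_transpose (A * Bᵀ), transpose_mul,
      transpose_transpose, hBA, transpose_one, Matrix.one_mul, hAB]
  have h₁₁ : (Aᵀ * A).toBlocks₁₁ = gram ℝ fun i => A.euclideanCol (.inl i) := by
    ext; simp [toBlocks₁₁, gram_apply, inner_euclideanCol]
  have h₂₂ : (Bᵀ * B).toBlocks₂₂ = gram ℝ fun j => B.euclideanCol (.inr j) := by
    ext; simp [toBlocks₂₂, gram_apply, inner_euclideanCol]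
  rw [← h₁₁, ← h₂₂]
  exact det_toBlocks₂₂_mul_det hGH (h₁₁ ▸ det_gram_ne_zero_iff_linearIndependent.2 hA)

end Duality

end Matrix

theorem orthogonal_sublattice_duality_general (d k : ℕ) (hk : k ≤ d)
    (M : Matrix (Fin d) (Fin d) ℝ) (hM : M.det = 1)
    (L : Submodule ℝ (EuclideanSpace ℝ (Fin d)))
    (hL : Module.finrank ℝ L = k)
    (Λ Λd : Set (EuclideanSpace ℝ (Fin d)))
    (hΛ : Λ = {v | ∃ x : Fin d → ℤ, ∀ i, v i = M.mulVec (fun j => (x j : ℝ)) i})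
    (hΛd : Λd = {v | ∃ x : Fin d → ℤ, ∀ i, v i = (M.transpose)⁻¹.mulVec (fun j => (x j : ℝ)) i})
    (b : Fin k → EuclideanSpace ℝ (Fin d))
    (hbmem : ∀ i, b i ∈ (L : Set (EuclideanSpace ℝ (Fin d))) ∩ Λ)
    (hbind : LinearIndependent ℝ b)
    (hbspan : (L : Set (EuclideanSpace ℝ (Fin d))) ∩ Λ
      = {v | ∃ c : Fin k → ℤ, v = ∑ i, (c i : ℝ) • b i}) :
    ∃ bp : Fin (d - k) → EuclideanSpace ℝ (Fin d),
      (∀ i, bp i ∈ (Lᗮ : Set (EuclideanSpace ℝ (Fin d))) ∩ Λd) ∧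
      LinearIndependent ℝ bp ∧
      ((Lᗮ : Set (EuclideanSpace ℝ (Fin d))) ∩ Λd
        = {v | ∃ c : Fin (d - k) → ℤ, v = ∑ i, (c i : ℝ) • bp i}) ∧
      Real.sqrt (Matrix.det (Matrix.of fun i j => ⟪bp i, bp j⟫)) =
        Real.sqrt (Matrix.det (Matrix.of fun i j => ⟪b i, b j⟫)) := by
  obtain rfl : Λ = M.colLattice := hΛ
  have hMdet : IsUnit M.det := hM ▸ isUnit_one
  have e : Fin k ⊕ Fin (d - k) ≃ Fin d := finSumFinEquiv.trans (finCongr (by omega))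
  obtain ⟨U, V, hUV, hVU, hb⟩ := exists_unimodular_euclideanCol_inl_eq (κ := Fin (d - k))
    ((isUnit_iff_isUnit_det M).2 hMdet) hbind hbspan (by simp [hk])
  set A := M * U.map (Int.cast : ℤ → ℝ)
  set B := (Mᵀ)⁻¹ * Vᵀ.map (Int.cast : ℤ → ℝ)
  have hAB : Aᵀ * B = 1 := transpose_mul_intCast_mul_inv_transpose hMdet hVU
  have hBA : B * Aᵀ = 1 := (mul_eq_one_comm_of_equiv e).1 hAB
  have hLspan : span ℝ (Set.range b) = L :=
    eq_of_le_of_finrank_le (span_le.2 (Set.range_subset_iff.2 fun i => (hbmem i).1))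
      (by rw [hL, finrank_span_eq_card hbind, Fintype.card_fin])
  obtain rfl : Λd = B.colLattice :=
    hΛd.trans (colLattice_mul_intCast _ (by rw [← transpose_mul, hUV, transpose_one])).symm
  refine ⟨fun j => B.euclideanCol (.inr j), fun j => ⟨?_, ?_⟩,
    (linearIndependent_euclideanCol_of_mul_eq_one hAB).comp _ Sum.inr_injective, ?_, ?_⟩
  · exact euclideanCol_inr_mem_orthogonal hAB (hb ▸ hLspan.ge) j
  · exact mem_colLattice_iff.2 ⟨Pi.single (.inr j) 1, by simp [Pi.single_apply]⟩
  · exact orthogonal_inter_colLattice hAB (hb ▸ hLspan)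
  · have := det_gram_inr_mul_det hAB hBA (hb ▸ hbind)
    rw [det_transpose_mul_self_mul_intCast e M hUV, hM, one_pow, mul_one, hb] at this
    exact congrArg Real.sqrt this

/-- Let `Λ = M ℤ^d` with `det M = 1`, and `Λ* = (Mᵀ)⁻¹ ℤ^d` its dual lattice.
If `L` is a `k`-dimensional subspace and `Γ = L ∩ Λ` is a lattice of rank `k`
(given by a ℤ-basis `b` of linearly independent vectors), then `Γ^⊥ = L^⊥ ∩ Λ*`
is a lattice of rank `d - k` and its covolume (square root of the Gram
determinant of a ℤ-basis) equals that of `Γ`. -/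
theorem orthogonal_sublattice_duality (d k : ℕ) (hd : 1 ≤ d) (hk : k ≤ d)
    (M : Matrix (Fin d) (Fin d) ℝ) (hM : M.det = 1)
    (L : Submodule ℝ (EuclideanSpace ℝ (Fin d)))
    (hL : Module.finrank ℝ L = k)
    (Λ Λd : Set (EuclideanSpace ℝ (Fin d)))
    (hΛ : Λ = {v | ∃ x : Fin d → ℤ, ∀ i, v i = M.mulVec (fun j => (x j : ℝ)) i})
    (hΛd : Λd = {v | ∃ x : Fin d → ℤ, ∀ i, v i = (M.transpose)⁻¹.mulVec (fun j => (x j : ℝ)) i})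
    (b : Fin k → EuclideanSpace ℝ (Fin d))
    (hbmem : ∀ i, b i ∈ (L : Set (EuclideanSpace ℝ (Fin d))) ∩ Λ)
    (hbind : LinearIndependent ℝ b)
    (hbspan : (L : Set (EuclideanSpace ℝ (Fin d))) ∩ Λ
      = {v | ∃ c : Fin k → ℤ, v = ∑ i, (c i : ℝ) • b i}) :
    ∃ bp : Fin (d - k) → EuclideanSpace ℝ (Fin d),
      (∀ i, bp i ∈ (Lᗮ : Set (EuclideanSpace ℝ (Fin d))) ∩ Λd) ∧
      LinearIndependent ℝ bp ∧
      ((Lᗮ : Set (EuclideanSpace ℝ (Fin d))) ∩ Λd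
        = {v | ∃ c : Fin (d - k) → ℤ, v = ∑ i, (c i : ℝ) • bp i}) ∧
      Real.sqrt (Matrix.det (Matrix.of fun i j => ⟪bp i, bp j⟫)) =
        Real.sqrt (Matrix.det (Matrix.of fun i j => ⟪b i, b j⟫)) :=
  orthogonal_sublattice_duality_general d k hk M hM L hL Λ Λd hΛ hΛd b hbmem hbind hbspan
end

section
/- Let ρ = (ρ₁,…,ρ_n) be positive weights summing to 1 and let Θ ∈ ℝ^{n×1} be a column with θ_{k1} irrational, where k is minimal such that θ_{k1} is irrational. Then the uniform weighted Diophantine exponent satisfies ω̂(Θ) ≤ ρ_k⁻¹; that is, for every γ > ρ_k⁻¹ there exist arbitrarily large t such that the system |x| ≤ t, max_i |θ_{i1}x − y_i|^{1/ρ_i} ≤ t^{−γ} has no nonzero integer solution (x, y₁,…,y_n). -/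
/-!
If `q₀ < q₁` are consecutive denominators of best approximations of `θ`, the integer
determinant `q₀ p₁ - q₁ p₀` is nonzero, so `1 ≤ q₀ ‖q₁θ‖ + q₁ ‖q₀θ‖ < 2 q₁ ‖q₀θ‖`.
Hence at `t = q₁ - 1` no `0 < |x| ≤ t` has `‖xθ‖ ≤ 1 / (2 (t + 1))`, which beats `t ^ (-δ)`
for every `δ > 1` once `t` is large. Irrationality supplies infinitely many such `q₁`.
Applied to the coordinate `θ k` with `δ = γ ρ k`, this rules out every solution with `x ≠ 0`;
solutions with `x = 0` are impossible as soon as `t ^ (-γ) < 1`.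
-/

open Filter

lemma one_lt_two_mul_mul_abs_sub_of_abs_sub_lt (θ : ℝ) {a b pa pb : ℤ} (ha : 0 < a)
    (hab : a ≤ b) (hlt : |θ * b - pb| < |θ * a - pa|) :
    1 < 2 * b * |θ * a - pa| := by
  have ha' : (0 : ℝ) < a := by exact_mod_cast ha
  have hab' : (a : ℝ) ≤ b := by exact_mod_cast hab
  have hb' : (0 : ℝ) < b := ha'.trans_le hab'
  have hcross_lt : a * |θ * b - pb| < b * |θ * a - pa| :=
    calc a * |θ * b - pb| ≤ b * |θ * b - pb| := by gcongr
      _ < b * |θ * a - pa| := by gcongr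
  have hcross : a * pb - b * pa ≠ 0 := by
    intro h0
    have hcast : (a : ℝ) * pb = b * pa := by exact_mod_cast sub_eq_zero.mp h0
    have hsame : (b : ℝ) * (θ * a - pa) = a * (θ * b - pb) := by linear_combination hcast
    have := congrArg abs hsame
    rw [abs_mul, abs_mul, abs_of_pos ha', abs_of_pos hb'] at this
    linarith
  calc (1 : ℝ) ≤ |((a * pb - b * pa : ℤ) : ℝ)| := by exact_mod_cast Int.one_le_abs hcross
    _ = |b * (θ * a - pa) - a * (θ * b - pb)| := by push_cast; ring_nf
    _ ≤ |b * (θ * a - pa)| + |a * (θ * b - pb)| := abs_sub _ _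
    _ = b * |θ * a - pa| + a * |θ * b - pb| := by
        rw [abs_mul, abs_mul, abs_of_pos ha', abs_of_pos hb']
    _ < 2 * b * |θ * a - pa| := by linarith

lemma exists_abs_natAbs_mul_sub_eq (θ : ℝ) (x p : ℤ) :
    ∃ p' : ℤ, |θ * x.natAbs - p'| = |θ * x - p| := by
  rcases le_or_gt 0 x with hx | hx
  · exact ⟨p, by rw [Nat.cast_natAbs, abs_of_nonneg hx]⟩
  · refine ⟨-p, ?_⟩
    rw [Nat.cast_natAbs, abs_of_neg hx, ← abs_neg]
    push_cast
    ring_nf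

lemma exists_nat_pos_abs_mul_sub_lt (θ : ℝ) {ε : ℝ} (hε : 0 < ε) :
    ∃ q : ℕ, 0 < q ∧ ∃ p : ℤ, |θ * q - p| < ε := by
  obtain ⟨n, hn⟩ := exists_nat_one_div_lt hε
  obtain ⟨q, hq, -, hq_le⟩ := Real.exists_nat_abs_mul_sub_round_le θ n.succ_pos
  refine ⟨q, hq, round (θ * q), ?_⟩
  rw [mul_comm (q : ℝ) θ] at hq_le
  push_cast at hq_le
  exact hq_le.trans_lt (lt_of_le_of_lt (by gcongr; linarith) hn)

lemma Irrational.exists_nat_gt_forall_inv_two_mul_lt_abs_mul_sub {θ : ℝ} (hθ : Irrational θ)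
    (N : ℕ) : ∃ b : ℕ, N < b ∧ ∀ x : ℤ, x ≠ 0 → |(x : ℝ)| < b → ∀ p : ℤ,
      (2 * b : ℝ)⁻¹ < |θ * x - p| := by
  obtain ⟨a, ha, ha_min⟩ := (Finset.Icc 1 (N + 1)).exists_min_image
    (fun q : ℕ => |θ * q - round (θ * q)|) ⟨1, by simp⟩
  classical
  rw [Finset.mem_Icc] at ha
  set ε := |θ * a - round (θ * a)|
  have hε_pos : 0 < ε :=
    abs_pos.mpr (sub_ne_zero.mpr ((hθ.mul_natCast (by omega)).ne_int _))
  have hε_le (q : ℕ) (hq : q ∈ Finset.Icc 1 (N + 1)) (p : ℤ) : ε ≤ |θ * q - p| :=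
    (ha_min q hq).trans (round_le _ p)
  have hP := exists_nat_pos_abs_mul_sub_lt θ hε_pos
  obtain ⟨hb_pos, pb, hpb⟩ := Nat.find_spec hP
  set b := Nat.find hP
  have hNb : N + 1 < b := by
    by_contra! hbN
    exact (hε_le b (Finset.mem_Icc.mpr ⟨hb_pos, hbN⟩) pb).not_gt hpb
  have hfar : 1 < 2 * b * ε := by
    simpa using one_lt_two_mul_mul_abs_sub_of_abs_sub_lt θ (a := a) (b := b) (pb := pb)
      (by omega) (by omega) (by simpa using hpb)
  refine ⟨b, by omega, fun x hx hxb p => ?_⟩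
  obtain ⟨p', hp'⟩ := exists_abs_natAbs_mul_sub_eq θ x p
  have hq_lt : x.natAbs < b := by
    rwa [← Nat.cast_lt (α := ℝ), Nat.cast_natAbs, Int.cast_abs]
  have hq_far : ε ≤ |θ * x.natAbs - p'| := by
    by_contra! hclose
    exact Nat.find_min hP hq_lt ⟨Int.natAbs_pos.mpr hx, p', hclose⟩
  calc (2 * b : ℝ)⁻¹ < ε := by
        rw [inv_lt_iff_one_lt_mul₀ (by positivity)]; linarith
    _ ≤ |θ * x - p| := hp' ▸ hq_far

lemma eventually_two_mul_add_one_le_rpow {δ : ℝ} (hδ : 1 < δ) :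
    ∀ᶠ t : ℝ in atTop, 2 * (t + 1) ≤ t ^ δ := by
  filter_upwards [(tendsto_rpow_atTop (sub_pos.mpr hδ)).eventually_ge_atTop 4,
    eventually_ge_atTop 1] with t ht ht1
  have hsplit : t ^ δ = t ^ (δ - 1) * t := by
    rw [← Real.rpow_add_one (by positivity)]; ring_nf
  nlinarith

lemma Irrational.exists_forall_rpow_neg_lt_abs_mul_sub {θ : ℝ} (hθ : Irrational θ) {δ : ℝ}
    (hδ : 1 < δ) (T : ℝ) : ∃ t, T ≤ t ∧ 1 < t ∧ ∀ x : ℤ, x ≠ 0 → |(x : ℝ)| ≤ t → ∀ p : ℤ,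
      t ^ (-δ) < |θ * x - p| := by
  obtain ⟨T₀, hT₀⟩ := eventually_atTop.mp (eventually_two_mul_add_one_le_rpow hδ)
  obtain ⟨b, hNb, hfar⟩ :=
    hθ.exists_nat_gt_forall_inv_two_mul_lt_abs_mul_sub (⌈max T₀ (max T 2)⌉₊ + 1)
  have hbig : max T₀ (max T 2) ≤ (b : ℝ) - 1 := by
    have := Nat.le_ceil (max T₀ (max T 2))
    have : ((⌈max T₀ (max T 2)⌉₊ + 1 : ℕ) : ℝ) + 1 ≤ b := by exact_mod_cast hNb
    push_cast at this
    linarith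
  simp only [max_le_iff] at hbig
  refine ⟨b - 1, hbig.2.1, by linarith, fun x hx hxt p => ?_⟩
  calc ((b : ℝ) - 1) ^ (-δ) = (((b : ℝ) - 1) ^ δ)⁻¹ := Real.rpow_neg (by linarith) δ
    _ ≤ (2 * b : ℝ)⁻¹ := inv_anti₀ (by linarith [hbig.2.2]) (by simpa using hT₀ _ hbig.1)
    _ < |θ * x - p| := hfar x hx (by linarith) p

theorem uniform_exponent_upper_bound_one_column_general (n : ℕ) (ρ : Fin n → ℝ)
    (hρpos : ∀ i, 0 < ρ i)
    (θ : Fin n → ℝ) (k : Fin n) (hk : Irrational (θ k))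
    (γ : ℝ) (hγ : γ > (ρ k)⁻¹) :
    ∀ T : ℝ, ∃ t : ℝ, T ≤ t ∧
      ¬ ∃ (x : ℤ) (y : Fin n → ℤ), (x ≠ 0 ∨ y ≠ 0) ∧
        |(x : ℝ)| ≤ t ∧ ∀ i, |θ i * (x : ℝ) - (y i : ℝ)| ^ (ρ i)⁻¹ ≤ t ^ (-γ) := by
  intro T
  have hδ : 1 < γ * ρ k := by rwa [gt_iff_lt, inv_lt_iff_one_lt_mul₀ (hρpos k)] at hγ
  obtain ⟨t, hTt, ht, hfar⟩ := hk.exists_forall_rpow_neg_lt_abs_mul_sub hδ T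
  have ht_γ : t ^ (-γ) < 1 :=
    Real.rpow_lt_one_of_one_lt_of_neg ht (by nlinarith [hρpos k])
  refine ⟨t, hTt, fun ⟨x, y, hxy, hxt, hsmall⟩ => ?_⟩
  rcases eq_or_ne x 0 with rfl | hx
  · obtain ⟨i, hi⟩ := Function.ne_iff.mp (hxy.resolve_left (not_not.mpr rfl))
    have hyi : (1 : ℝ) ≤ |(y i : ℝ)| := by exact_mod_cast Int.one_le_abs hi
    have := hsmall i
    rw [Int.cast_zero, mul_zero, zero_sub, abs_neg] at this
    linarith [Real.one_le_rpow hyi (inv_pos.mpr (hρpos i)).le]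
  · have hk_small := (Real.rpow_inv_le_iff_of_pos (abs_nonneg _) (by positivity) (hρpos k)).mp
      (hsmall k)
    rw [← Real.rpow_mul (zero_le_one.trans ht.le), neg_mul] at hk_small
    exact (hfar x hx hxt (y k)).not_ge hk_small

/-- Let `ρ` be positive weights summing to 1 and `θ ∈ ℝ^{n×1}` a column with
`θ k` irrational, `k` minimal such. Then the uniform weighted Diophantine
exponent is at most `ρ k⁻¹`: for every `γ > (ρ k)⁻¹` there exist arbitrarily
large `t` such that the system `|x| ≤ t`, `max_i |θ i · x - y i|^{1/ρ i} ≤ t^{-γ}`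
has no nonzero integer solution. -/
theorem uniform_exponent_upper_bound_one_column (n : ℕ) (ρ : Fin n → ℝ)
    (hρpos : ∀ i, 0 < ρ i) (hρsum : ∑ i, ρ i = 1)
    (θ : Fin n → ℝ) (k : Fin n) (hk : Irrational (θ k))
    (hkmin : ∀ i : Fin n, i < k → ¬ Irrational (θ i))
    (γ : ℝ) (hγ : γ > (ρ k)⁻¹) :
    ∀ T : ℝ, ∃ t : ℝ, T ≤ t ∧
      ¬ ∃ (x : ℤ) (y : Fin n → ℤ), (x ≠ 0 ∨ y ≠ 0) ∧
        |(x : ℝ)| ≤ t ∧ ∀ i, |θ i * (x : ℝ) - (y i : ℝ)| ^ (ρ i)⁻¹ ≤ t ^ (-γ) :=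
  uniform_exponent_upper_bound_one_column_general n ρ hρpos θ k hk γ hγ
end

section
/- Fix s > 1, δ > α > 1, S = s^{δ/α}, and let Σ ⊂ ℝ^{m+n} be a discrete set such that every 'leaf' Q(r,α) with s ≤ r ≤ S contains a point of Σ, while the root 'node' Q_s = Q(s,δ) contains no point of Σ. Then there exists r with s < r < S and a leaf Q(r',α) produced by the node Q_r (i.e., r' = r or r' = sS/r) containing two distinct points of Σ, one of which lies in Q_r. -/
/-!
Every point `v` of `Σ` lies in the leaves `Q(r, α)` for a closed set of parameters `r ∈ [s, S]`,
and the leaves for `s ≤ r ≤ S` lie in a fixed compact set, so only finitely many points of `Σ`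
are involved. Split these points according to whether they lie in `Q(S, α)`. Since
`Q(s, α) ∩ Q(S, α) ⊆ Q_s` misses `Σ`, the point of `Σ` in `Q(s, α)` is not in `Q(S, α)`, while
the point in `Q(S, α)` is; by connectedness of `[s, S]` some leaf `Q(x, α)` contains a point `v`
of each kind. Then `x ≠ s, S`, and `Q(x, α)` is a leaf of the node `Q_r` with `r = x` if
`x² ≥ sS` and `r = sS/x` otherwise; that node contains the whole leaf, in particular `v`.
-/

open Set

theorem IsPreconnected.exists_mem_of_finite_closed_cover {X ι : Type*} [TopologicalSpace X]
    {s : Set X} (hs : IsPreconnected s) {F : Set ι} (hF : F.Finite) {J : ι → Set X}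
    (hJ : ∀ v ∈ F, IsClosed (J v)) (hcover : s ⊆ ⋃ v ∈ F, J v) (p : ι → Prop)
    (hneg : ∃ v ∈ F, ¬p v ∧ (s ∩ J v).Nonempty) (hpos : ∃ w ∈ F, p w ∧ (s ∩ J w).Nonempty) :
    ∃ x ∈ s, ∃ v ∈ F, ∃ w ∈ F, ¬p v ∧ p w ∧ x ∈ J v ∧ x ∈ J w := by
  have hclosed : ∀ q : ι → Prop, IsClosed (⋃ v ∈ {v ∈ F | q v}, J v) := fun q =>
    (hF.subset (sep_subset F q)).isClosed_biUnion fun v hv => hJ v hv.1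
  have hcover' : s ⊆ (⋃ v ∈ {v ∈ F | ¬p v}, J v) ∪ ⋃ w ∈ {w ∈ F | p w}, J w := by
    intro x hx
    obtain ⟨v, hvF, hxv⟩ := mem_iUnion₂.1 (hcover hx)
    by_cases hpv : p v
    · exact Or.inr (mem_biUnion ⟨hvF, hpv⟩ hxv)
    · exact Or.inl (mem_biUnion ⟨hvF, hpv⟩ hxv)
  obtain ⟨v, hvF, hpv, x, hxs, hxv⟩ := hneg
  obtain ⟨w, hwF, hpw, y, hys, hyw⟩ := hpos
  obtain ⟨z, hzs, hzT, hzT'⟩ := isPreconnected_closed_iff.1 hs _ _ (hclosed _) (hclosed _)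
    hcover' ⟨x, hxs, mem_biUnion ⟨hvF, hpv⟩ hxv⟩ ⟨y, hys, mem_biUnion ⟨hwF, hpw⟩ hyw⟩
  obtain ⟨v', ⟨hv'F, hpv'⟩, hzv'⟩ := mem_iUnion₂.1 hzT
  obtain ⟨w', ⟨hw'F, hpw'⟩, hzw'⟩ := mem_iUnion₂.1 hzT'
  exact ⟨z, hzs, v', hv'F, w', hw'F, hpv', hpw', hzv', hzw'⟩

namespace StemAndLeaves

variable {ι κ : Type*}

theorem exists_node_index {a b x : ℝ} (ha : 0 < a) (hax : a < x) (hxb : x < b) :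
    ∃ r, a < r ∧ r < b ∧ (x = r ∨ x = a * b / r) ∧ a * b / r ≤ x ∧ x ≤ r := by
  have hx : 0 < x := ha.trans hax
  have hb : 0 < b := hx.trans hxb
  rcases le_total (a * b) (x * x) with hle | hle
  · exact ⟨x, hax, hxb, Or.inl rfl, (div_le_iff₀ hx).2 hle, le_rfl⟩
  · have hdiv : a * b / (a * b / x) = x := by field_simp
    refine ⟨a * b / x, ?_, ?_, Or.inr hdiv.symm, hdiv.le, (le_div_iff₀ hx).2 hle⟩
    · rw [lt_div_iff₀ hx]; nlinarith
    · rw [div_lt_iff₀ hx]; nlinarith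

/-- The ball `|x|_σ ≤ c` of the quasi-norm `|x|_σ = max_j |x_j| ^ (1 / σ_j)`. -/
def weightedBox (σ : ι → ℝ) (c : ℝ) : Set (ι → ℝ) :=
  {x | ∀ j, |x j| ^ (σ j)⁻¹ ≤ c}

/-- The leaf `Q(r, α)`. -/
def leaf (σ : ι → ℝ) (ρ : κ → ℝ) (α r : ℝ) : Set ((ι → ℝ) × (κ → ℝ)) :=
  weightedBox σ (r ^ (-α)) ×ˢ weightedBox ρ r

/-- The node `Q_r` for `c = sS`. -/
def node (σ : ι → ℝ) (ρ : κ → ℝ) (α c r : ℝ) : Set ((ι → ℝ) × (κ → ℝ)) :=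
  weightedBox σ ((c / r) ^ (-α)) ×ˢ weightedBox ρ r

theorem weightedBox_mono {σ : ι → ℝ} {c c' : ℝ} (h : c ≤ c') :
    weightedBox σ c ⊆ weightedBox σ c' :=
  fun _ hx j => (hx j).trans h

theorem weightedBox_subset_Icc {σ : ι → ℝ} (hσ : ∀ j, 0 < σ j) (c : ℝ) :
    weightedBox σ c ⊆ Icc (fun j => -c ^ σ j) (fun j => c ^ σ j) := by
  intro x hx
  have habs : ∀ j, |x j| ≤ c ^ σ j := fun j => by
    simpa only [Real.rpow_inv_rpow (abs_nonneg _) (hσ j).ne'] using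
      Real.rpow_le_rpow (by positivity) (hx j) (hσ j).le
  exact ⟨fun j => neg_le_of_abs_le (habs j), fun j => le_of_abs_le (habs j)⟩

theorem isCompact_weightedBox {σ : ι → ℝ} (hσ : ∀ j, 0 < σ j) (c : ℝ) :
    IsCompact (weightedBox σ c) := by
  have hclosed : IsClosed (weightedBox σ c) := by
    simp only [weightedBox, ofPred_forall]
    exact isClosed_iInter fun j => isClosed_le
      ((Real.continuous_rpow_const (inv_nonneg.2 (hσ j).le)).comp
        (continuous_apply j).abs) continuous_const
  exact isCompact_Icc.of_isClosed_subset hclosed (weightedBox_subset_Icc hσ c)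

variable {σ : ι → ℝ} {ρ : κ → ℝ} {α : ℝ}

theorem leaf_subset_prod (hα : 0 ≤ α) {a b r : ℝ} (ha : 0 < a) (har : a ≤ r) (hrb : r ≤ b) :
    leaf σ ρ α r ⊆ weightedBox σ (a ^ (-α)) ×ˢ weightedBox ρ b :=
  prod_mono (weightedBox_mono (Real.rpow_le_rpow_of_nonpos ha har (neg_nonpos.2 hα)))
    (weightedBox_mono hrb)

theorem leaf_subset_node (hα : 0 ≤ α) {c r x : ℝ} (hc : 0 < c / r) (hcx : c / r ≤ x)
    (hxr : x ≤ r) : leaf σ ρ α x ⊆ node σ ρ α c r :=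
  leaf_subset_prod hα hc hcx hxr

theorem leaf_inter_leaf_div_subset_node (c r : ℝ) :
    leaf σ ρ α r ∩ leaf σ ρ α (c / r) ⊆ node σ ρ α c r :=
  fun _ hz => ⟨hz.2.1, hz.1.2⟩

theorem isClosed_Icc_inter_setOf_mem_leaf (v : (ι → ℝ) × (κ → ℝ))
    {a b : ℝ} (ha : 0 < a) : IsClosed (Icc a b ∩ {r | v ∈ leaf σ ρ α r}) := by
  have hcont : ContinuousOn (fun r : ℝ => r ^ (-α)) (Icc a b) :=
    continuousOn_id.rpow_const fun r hr => Or.inl (ha.trans_le hr.1).ne'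
  have heq : Icc a b ∩ {r | v ∈ leaf σ ρ α r} =
      (Icc a b ∩ (fun r : ℝ => r ^ (-α)) ⁻¹' {y | ∀ j, |v.1 j| ^ (σ j)⁻¹ ≤ y}) ∩
        {r | ∀ i, |v.2 i| ^ (ρ i)⁻¹ ≤ r} := by
    ext r
    simp only [leaf, weightedBox, mem_inter_iff, mem_ofPred_eq, mem_prod, mem_preimage, and_assoc]
  rw [heq, ofPred_forall, ofPred_forall]
  exact (hcont.preimage_isClosed_of_isClosed isClosed_Icc
    (isClosed_iInter fun j => isClosed_Ici)).inter (isClosed_iInter fun i => isClosed_Ici)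

end StemAndLeaves

open StemAndLeaves

theorem there_is_a_good_leaf_general (m n : ℕ)
    (σ : Fin m → ℝ) (ρ : Fin n → ℝ)
    (hσpos : ∀ j, 0 < σ j) (hρpos : ∀ i, 0 < ρ i)
    (s δ α S : ℝ) (hs : 1 < s) (hα1 : 1 < α) (hαδ : α < δ)
    (hS : S = s ^ (δ / α))
    (Qnode Qleaf : ℝ → Set ((Fin m → ℝ) × (Fin n → ℝ)))
    (hQnode : ∀ r, Qnode r =
      {z | (∀ j, |z.1 j| ^ (σ j)⁻¹ ≤ (s * S / r) ^ (-α)) ∧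
           (∀ i, |z.2 i| ^ (ρ i)⁻¹ ≤ r)})
    (hQleaf : ∀ r, Qleaf r =
      {z | (∀ j, |z.1 j| ^ (σ j)⁻¹ ≤ r ^ (-α)) ∧
           (∀ i, |z.2 i| ^ (ρ i)⁻¹ ≤ r)})
    (Sig : Set ((Fin m → ℝ) × (Fin n → ℝ)))
    (hdisc : ∀ K : Set ((Fin m → ℝ) × (Fin n → ℝ)), IsCompact K → (Sig ∩ K).Finite)
    (hleaves : ∀ r : ℝ, s ≤ r → r ≤ S → ∃ v ∈ Sig, v ∈ Qleaf r)
    (hroot : ∀ v ∈ Sig, v ∉ Qnode s) :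
    ∃ r r' : ℝ, s < r ∧ r < S ∧ (r' = r ∨ r' = s * S / r) ∧
      ∃ v w, v ∈ Sig ∧ w ∈ Sig ∧ v ≠ w ∧
        v ∈ Qleaf r' ∧ w ∈ Qleaf r' ∧ v ∈ Qnode r := by
  obtain rfl : Qleaf = leaf σ ρ α := funext hQleaf
  obtain rfl : Qnode = node σ ρ α (s * S) := funext hQnode
  have hs0 : 0 < s := one_pos.trans hs
  have hα : 0 ≤ α := by linarith
  have hsS : s < S := hS ▸ Real.self_lt_rpow_of_one_lt hs ((one_lt_div (by linarith)).2 hαδ)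
  have hroot' : ∀ v ∈ Sig, v ∈ leaf σ ρ α s → v ∉ leaf σ ρ α S := fun v hv hvs hvS =>
    hroot v hv (leaf_inter_leaf_div_subset_node _ s ⟨hvs, by rwa [mul_div_cancel_left₀ S hs0.ne']⟩)
  set K := weightedBox σ (s ^ (-α)) ×ˢ weightedBox ρ S
  have hF : (Sig ∩ K).Finite :=
    hdisc K ((isCompact_weightedBox hσpos _).prod (isCompact_weightedBox hρpos _))
  have hsmem : s ∈ Icc s S := left_mem_Icc.2 hsS.le
  have hSmem : S ∈ Icc s S := right_mem_Icc.2 hsS.le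
  have hleaf : ∀ r ∈ Icc s S, ∃ v ∈ Sig ∩ K, v ∈ leaf σ ρ α r := fun r hr =>
    let ⟨v, hv, hvr⟩ := hleaves r hr.1 hr.2
    ⟨v, ⟨hv, leaf_subset_prod hα hs0 hr.1 hr.2 hvr⟩, hvr⟩
  obtain ⟨v₀, hv₀, hv₀s⟩ := hleaf s hsmem
  obtain ⟨w₀, hw₀, hw₀S⟩ := hleaf S hSmem
  obtain ⟨x, hx, v, ⟨hv, -⟩, w, ⟨hw, -⟩, hvS, hwS, ⟨-, hvx⟩, ⟨-, hwx⟩⟩ :=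
    isPreconnected_Icc.exists_mem_of_finite_closed_cover hF
      (J := fun v => Icc s S ∩ {r | v ∈ leaf σ ρ α r})
      (fun v _ => isClosed_Icc_inter_setOf_mem_leaf v hs0)
      (fun r hr => let ⟨v, hvF, hvr⟩ := hleaf r hr; mem_biUnion hvF ⟨hr, hvr⟩)
      (· ∈ leaf σ ρ α S)
      ⟨v₀, hv₀, hroot' v₀ hv₀.1 hv₀s, s, hsmem, hsmem, hv₀s⟩
      ⟨w₀, hw₀, hw₀S, S, hSmem, hSmem, hw₀S⟩
  have hsx : s < x := hx.1.lt_of_ne fun h => hroot' w hw (h ▸ hwx) hwS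
  have hxS : x < S := hx.2.lt_of_ne fun h => hvS (h ▸ hvx)
  have hvw : v ≠ w := by rintro rfl; exact hvS hwS
  obtain ⟨r, hsr, hrS, hxr, hrx, hxr'⟩ := exists_node_index hs0 hsx hxS
  exact ⟨r, x, hsr, hrS, hxr, v, w, hv, hw, hvw, hvx, hwx,
    leaf_subset_node hα (div_pos (mul_pos hs0 (hs0.trans hsS)) (hs0.trans hsr)) hrx hxr' hvx⟩

/-- If every 'leaf' `Q(r,α)`, `s ≤ r ≤ S`, contains a point of a discrete set
`Σ` while the root 'node' `Q_s = Q(s,δ)` contains none, then some leaf produced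
by a node `Q_r`, `s < r < S`, contains two distinct points of `Σ`, one of which
lies in the node `Q_r`. -/
theorem there_is_a_good_leaf (m n : ℕ) (hm : 1 ≤ m) (hn : 1 ≤ n)
    (σ : Fin m → ℝ) (ρ : Fin n → ℝ)
    (hσpos : ∀ j, 0 < σ j) (hρpos : ∀ i, 0 < ρ i)
    (hσsum : ∑ j, σ j = 1) (hρsum : ∑ i, ρ i = 1)
    (s δ α S : ℝ) (hs : 1 < s) (hα1 : 1 < α) (hαδ : α < δ)
    (hS : S = s ^ (δ / α))
    (Qnode Qleaf : ℝ → Set ((Fin m → ℝ) × (Fin n → ℝ)))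
    (hQnode : ∀ r, Qnode r =
      {z | (∀ j, |z.1 j| ^ (σ j)⁻¹ ≤ (s * S / r) ^ (-α)) ∧
           (∀ i, |z.2 i| ^ (ρ i)⁻¹ ≤ r)})
    (hQleaf : ∀ r, Qleaf r =
      {z | (∀ j, |z.1 j| ^ (σ j)⁻¹ ≤ r ^ (-α)) ∧
           (∀ i, |z.2 i| ^ (ρ i)⁻¹ ≤ r)})
    (Sig : Set ((Fin m → ℝ) × (Fin n → ℝ)))
    (hdisc : ∀ K : Set ((Fin m → ℝ) × (Fin n → ℝ)), IsCompact K → (Sig ∩ K).Finite)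
    (hleaves : ∀ r : ℝ, s ≤ r → r ≤ S → ∃ v ∈ Sig, v ∈ Qleaf r)
    (hroot : ∀ v ∈ Sig, v ∉ Qnode s) :
    ∃ r r' : ℝ, s < r ∧ r < S ∧ (r' = r ∨ r' = s * S / r) ∧
      ∃ v w, v ∈ Sig ∧ w ∈ Sig ∧ v ≠ w ∧
        v ∈ Qleaf r' ∧ w ∈ Qleaf r' ∧ v ∈ Qnode r :=
  there_is_a_good_leaf_general m n σ ρ hσpos hρpos s δ α S hs hα1 hαδ hS Qnode Qleaf hQnode hQleaf
    Sig hdisc hleaves hroot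
end
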